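/- Let ξ and η be positive irrational real numbers and m a positive natural number with ξ·η = m and η < m. If n ≥ 0 and the partial quotient b_{n+1} of ξ satisfies b_{n+1} ≥ 2m + 1, then the rational number m·q_n/p_n is a convergent of η; that is, there exists an index k ≥ 0 with m·q_n/p_n = P_k/Q_k. -/

import Mathlib

/-- Complete quotients: `cq ξ 0 = ξ`, `cq ξ (n+1) = 1/(cq ξ n - ⌊cq ξ n⌋)`. -/
noncomputable def cq (ξ : ℝ) : ℕ → ℝ
  | 0 => ξ
  | n + 1 => 1 / (cq ξ n - ⌊cq ξ n⌋)

/-- Partial quotients: `pquot ξ n = b_n = ⌊ξ_n⌋`. -/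
noncomputable def pquot (ξ : ℝ) (n : ℕ) : ℤ := ⌊cq ξ n⌋

/-- Convergent numerators, shifted by one: `cnum ξ 0 = p_{-1} = 1`,
`cnum ξ 1 = p_0 = b_0`, and `cnum ξ (n+1) = p_n = b_n p_{n-1} + p_{n-2}`. -/
noncomputable def cnum (ξ : ℝ) : ℕ → ℤ
  | 0 => 1
  | 1 => pquot ξ 0
  | n + 2 => pquot ξ (n + 1) * cnum ξ (n + 1) + cnum ξ n

/-- Convergent denominators, shifted by one: `cden ξ 0 = q_{-1} = 0`,
`cden ξ 1 = q_0 = 1`, and `cden ξ (n+1) = q_n = b_n q_{n-1} + q_{n-2}`. -/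
noncomputable def cden (ξ : ℝ) : ℕ → ℤ
  | 0 => 0
  | 1 => 1
  | n + 2 => pquot ξ (n + 1) * cden ξ (n + 1) + cden ξ n

/-!
By Legendre's theorem it suffices to show `|η - m q_n / p_n| < 1 / (2 p_n²)`. Since `η = m / ξ`,
the left side is `m |ξ q_n - p_n| / (ξ p_n)`, and
`|ξ q_n - p_n| = 1 / (ξ_{n+1} q_n + q_{n-1})` with `ξ_{n+1} > b_{n+1} ≥ 2m + 1`. Hence
`2m (p_n - ξ q_n) < 1 < ξ q_n` (as `ξ = m / η > 1`), so
`2m p_n < (2m + 1) ξ q_n < ξ (ξ_{n+1} q_n + q_{n-1})`, which is the required estimate.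
-/

section CompleteQuotients

variable {ξ : ℝ}

lemma cq_succ (ξ : ℝ) (n : ℕ) : cq ξ (n + 1) = (Int.fract (cq ξ n))⁻¹ := by
  rw [cq, one_div, Int.fract]

lemma cq_eq_pquot_add_inv_cq_succ (ξ : ℝ) (n : ℕ) :
    cq ξ n = pquot ξ n + (cq ξ (n + 1))⁻¹ := by
  rw [cq_succ, inv_inv, pquot, Int.floor_add_fract]

lemma cq_succ_eq_cq_cq_one (ξ : ℝ) : ∀ n, cq ξ (n + 1) = cq (cq ξ 1) n
  | 0 => rfl
  | n + 1 => by rw [cq_succ ξ (n + 1), cq_succ_eq_cq_cq_one ξ n, cq_succ (cq ξ 1) n]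

lemma pquot_succ_eq_pquot_cq_one (ξ : ℝ) (n : ℕ) : pquot ξ (n + 1) = pquot (cq ξ 1) n :=
  congrArg Int.floor (cq_succ_eq_cq_cq_one ξ n)

lemma irrational_cq (h : Irrational ξ) : ∀ n, Irrational (cq ξ n)
  | 0 => h
  | n + 1 => by
    rw [cq_succ]
    exact ((irrational_cq h n).sub_intCast _).inv

lemma fract_cq_pos (h : Irrational ξ) (n : ℕ) : 0 < Int.fract (cq ξ n) :=
  Int.fract_pos.mpr ((irrational_cq h n).ne_int _)

lemma one_lt_cq_succ (h : Irrational ξ) (n : ℕ) : 1 < cq ξ (n + 1) := by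
  rw [cq_succ]
  exact (one_lt_inv₀ (fract_cq_pos h n)).mpr (Int.fract_lt_one _)

lemma pquot_lt_cq (h : Irrational ξ) (n : ℕ) : (pquot ξ n : ℝ) < cq ξ n :=
  (Int.floor_le _).lt_of_ne ((irrational_cq h n).ne_int _).symm

lemma one_le_pquot_succ (h : Irrational ξ) (n : ℕ) : 1 ≤ pquot ξ (n + 1) :=
  Int.le_floor.mpr (by exact_mod_cast (one_lt_cq_succ h n).le)

lemma one_le_pquot (h : Irrational ξ) (h1 : 1 ≤ ξ) : ∀ n, 1 ≤ pquot ξ n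
  | 0 => Int.le_floor.mpr (by exact_mod_cast h1)
  | n + 1 => one_le_pquot_succ h n

end CompleteQuotients

section Convergents

variable {ξ : ℝ}

lemma cnum_add_two (ξ : ℝ) (n : ℕ) :
    cnum ξ (n + 2) = pquot ξ (n + 1) * cnum ξ (n + 1) + cnum ξ n := rfl

lemma cden_add_two (ξ : ℝ) (n : ℕ) :
    cden ξ (n + 2) = pquot ξ (n + 1) * cden ξ (n + 1) + cden ξ n := rfl

lemma one_le_cnum (h : Irrational ξ) (h1 : 1 ≤ ξ) : ∀ n, 1 ≤ cnum ξ n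
  | 0 => le_rfl
  | 1 => one_le_pquot h h1 0
  | n + 2 => by
    have := one_le_cnum h h1 (n + 1)
    have := one_le_cnum h h1 n
    have := one_le_pquot_succ h n
    rw [cnum_add_two]
    nlinarith

lemma cden_nonneg (h : Irrational ξ) : ∀ n, 0 ≤ cden ξ n
  | 0 => le_rfl
  | 1 => zero_le_one
  | n + 2 => by
    have := cden_nonneg h (n + 1)
    have := cden_nonneg h n
    have := one_le_pquot_succ h n
    rw [cden_add_two]
    positivity

lemma one_le_cden_succ (h : Irrational ξ) : ∀ n, 1 ≤ cden ξ (n + 1)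
  | 0 => le_rfl
  | n + 1 => by
    have := one_le_cden_succ h n
    have := cden_nonneg h n
    have := one_le_pquot_succ h n
    rw [cden_add_two]
    nlinarith

/-- Peeling off the first partial quotient: `p_n / q_n = b_0 + 1 / (p'_{n-1} / q'_{n-1})`, where
`'` refers to the continued fraction of `ξ_1`. -/
lemma cnum_succ_eq_and_cden_succ_eq (ξ : ℝ) : ∀ n,
    cnum ξ (n + 1) = ⌊ξ⌋ * cnum (cq ξ 1) n + cden (cq ξ 1) n ∧
      cden ξ (n + 1) = cnum (cq ξ 1) n
  | 0 => by simp [cnum, cden, pquot, cq]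
  | 1 => by constructor <;> simp [cnum, cden, pquot, cq, mul_comm]
  | n + 2 => by
    obtain ⟨hnum, hden⟩ := cnum_succ_eq_and_cden_succ_eq ξ n
    obtain ⟨hnum', hden'⟩ := cnum_succ_eq_and_cden_succ_eq ξ (n + 1)
    rw [cnum_add_two ξ (n + 1), cden_add_two ξ (n + 1), cnum_add_two (cq ξ 1) n,
      cden_add_two (cq ξ 1) n, hnum, hden, hnum', hden', pquot_succ_eq_pquot_cq_one]
    constructor <;> ring

lemma convergent_eq_cnum_div_cden : ∀ (k : ℕ) {x : ℝ}, Irrational x →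
    (x.convergent k : ℝ) = cnum x (k + 1) / cden x (k + 1)
  | 0, x, _ => by simp [cnum, cden, pquot, cq]
  | k + 1, x, hx => by
    obtain ⟨hnum, hden⟩ := cnum_succ_eq_and_cden_succ_eq x (k + 1)
    have hpos : (1 : ℝ) ≤ cnum (cq x 1) (k + 1) := by
      exact_mod_cast one_le_cnum (irrational_cq hx 1) (one_lt_cq_succ hx 0).le (k + 1)
    rw [Real.convergent_succ, hnum, hden]
    push_cast
    rw [show (Int.fract x)⁻¹ = cq x 1 from (cq_succ x 0).symm,
      convergent_eq_cnum_div_cden k (irrational_cq hx 1), inv_div]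
    field_simp

lemma exists_cnum_div_cden_eq_of_abs_sub_lt {x : ℝ} (hx : Irrational x) {a b : ℤ} (hb : 0 < b)
    (h : |x - a / b| < 1 / (2 * b ^ 2)) :
    ∃ k, (a / b : ℝ) = cnum x (k + 1) / cden x (k + 1) := by
  set r : ℚ := a / b with hr
  have hcast : (r : ℝ) = a / b := by rw [hr]; push_cast; rfl
  have hden : (r.den : ℝ) ≤ b := by
    have hdvd : (r.den : ℤ) ∣ b := by rw [hr, ← Rat.divInt_eq_div]; exact Rat.den_dvd a b
    exact_mod_cast Int.le_of_dvd hb hdvd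
  have hr_close : |x - r| < 1 / (2 * (r.den : ℝ) ^ 2) := by
    rw [hcast]
    refine h.trans_le (one_div_le_one_div_of_le (by positivity) ?_)
    gcongr
  obtain ⟨k, hk⟩ := Real.exists_rat_eq_convergent hr_close
  exact ⟨k, by rw [← hcast, hk, convergent_eq_cnum_div_cden k hx]⟩

lemma cnum_succ_mul_cden_sub_cnum_mul_cden_succ (ξ : ℝ) :
    ∀ n, cnum ξ (n + 1) * cden ξ n - cnum ξ n * cden ξ (n + 1) = (-1) ^ (n + 1)
  | 0 => by simp [cnum, cden]
  | n + 1 => by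
    rw [cnum_add_two, cden_add_two]
    linear_combination (-1 : ℤ) * cnum_succ_mul_cden_sub_cnum_mul_cden_succ ξ n

lemma sub_eq_neg_cq_succ_mul_sub (h : Irrational ξ) : ∀ n,
    ξ * cden ξ n - cnum ξ n = -(cq ξ (n + 1) * (ξ * cden ξ (n + 1) - cnum ξ (n + 1)))
  | 0 => by
    have hfract := (fract_cq_pos h 0).ne'
    rw [cq_succ]
    simp only [cq, cnum, cden, pquot, Int.cast_zero, Int.cast_one, mul_zero, mul_one] at hfract ⊢
    rw [← Int.fract, inv_mul_cancel₀ hfract]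
    ring
  | n + 1 => by
    have hz : cq ξ (n + 2) ≠ 0 := (zero_lt_one.trans (one_lt_cq_succ h (n + 1))).ne'
    rw [cnum_add_two, cden_add_two]
    push_cast
    set e : ℝ := ξ * cden ξ (n + 1) - cnum ξ (n + 1)
    linear_combination cq ξ (n + 2) * sub_eq_neg_cq_succ_mul_sub h n -
      cq ξ (n + 2) * e * cq_eq_pquot_add_inv_cq_succ ξ (n + 1) - e * mul_inv_cancel₀ hz

lemma sub_mul_cq_succ_mul_add_eq_neg_one_pow (h : Irrational ξ) (n : ℕ) :
    (ξ * cden ξ (n + 1) - cnum ξ (n + 1)) * (cq ξ (n + 1) * cden ξ (n + 1) + cden ξ n) =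
      (-1) ^ n := by
  have hdet : (cnum ξ (n + 1) * cden ξ n - cnum ξ n * cden ξ (n + 1) : ℝ) = (-1) ^ (n + 1) :=
    mod_cast cnum_succ_mul_cden_sub_cnum_mul_cden_succ ξ n
  linear_combination (cden ξ (n + 1) : ℝ) * sub_eq_neg_cq_succ_mul_sub h n - hdet

end Convergents

lemma abs_div_sub_mul_cden_div_cnum_lt {ξ : ℝ} (h : Irrational ξ) (h1 : 1 < ξ) {m n : ℕ}
    (hb : (2 * m + 1 : ℤ) ≤ pquot ξ (n + 1)) :
    |m / ξ - m * (cden ξ (n + 1) : ℝ) / cnum ξ (n + 1)| <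
      1 / (2 * (cnum ξ (n + 1) : ℝ) ^ 2) := by
  have hp : (1 : ℝ) ≤ cnum ξ (n + 1) := by exact_mod_cast one_le_cnum h h1.le (n + 1)
  have hq : (1 : ℝ) ≤ cden ξ (n + 1) := by exact_mod_cast one_le_cden_succ h n
  have hq₀ : (0 : ℝ) ≤ cden ξ n := by exact_mod_cast cden_nonneg h n
  set p : ℝ := ((cnum ξ (n + 1) : ℤ) : ℝ)
  set q : ℝ := ((cden ξ (n + 1) : ℤ) : ℝ)
  set D : ℝ := cq ξ (n + 1) * q + cden ξ n
  have hζ : 2 * (m : ℝ) + 1 < cq ξ (n + 1) :=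
    lt_of_le_of_lt (by exact_mod_cast hb) (pquot_lt_cq h (n + 1))
  have hqD : (2 * m + 1) * q < D := by nlinarith
  have herr : |ξ * q - p| * D = 1 := by
    have := congrArg abs (sub_mul_cq_succ_mul_add_eq_neg_one_pow h n)
    rwa [abs_mul, abs_of_pos (by nlinarith : 0 < D), abs_pow, abs_neg, abs_one, one_pow] at this
  have herr_pos : 0 < |ξ * q - p| := pos_of_mul_pos_left (herr ▸ one_pos) (by nlinarith)
  have hsmall : 2 * m * |ξ * q - p| < 1 := by nlinarith
  have hp_le : p ≤ ξ * q + |ξ * q - p| := by linarith [neg_abs_le (ξ * q - p)]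
  have hmain : 2 * m * p < ξ * D :=
    calc 2 * m * p ≤ 2 * m * (ξ * q + |ξ * q - p|) := by gcongr
      _ < 2 * m * ξ * q + ξ * q := by nlinarith
      _ = ξ * ((2 * m + 1) * q) := by ring
      _ < ξ * D := by gcongr
  have hrepr : (m : ℝ) / ξ - m * q / p = m * (p - ξ * q) / (ξ * p) := by field_simp
  have hξp : 0 < ξ * p := mul_pos (by linarith) (by linarith)
  rw [hrepr, abs_div, abs_mul, abs_of_nonneg (Nat.cast_nonneg m), abs_of_pos hξp, abs_sub_comm,
    div_lt_div_iff₀ hξp (by positivity)]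
  calc m * |ξ * q - p| * (2 * p ^ 2) = 2 * m * p * (p * |ξ * q - p|) := by ring
    _ < ξ * D * (p * |ξ * q - p|) := by gcongr
    _ = 1 * (ξ * p) := by linear_combination ξ * p * herr

theorem big_partial_quotient_gives_connection_general
    (ξ η : ℝ) (m : ℕ) (hηpos : 0 < η)
    (hξirr : Irrational ξ) (hηirr : Irrational η)
    (hmul : ξ * η = m) (hηm : η < m) (n : ℕ)
    (hb : (2 * m + 1 : ℤ) ≤ pquot ξ (n + 1)) :
    ∃ k : ℕ, (m : ℝ) * (cden ξ (n + 1) : ℝ) / (cnum ξ (n + 1) : ℝ) =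
      (cnum η (k + 1) : ℝ) / (cden η (k + 1) : ℝ) := by
  have hξ1 : 1 < ξ := by nlinarith
  have hη : η = m / ξ := by rw [← hmul]; field_simp
  have hp : 0 < cnum ξ (n + 1) := one_le_cnum hξirr hξ1.le (n + 1)
  obtain ⟨k, hk⟩ := exists_cnum_div_cden_eq_of_abs_sub_lt hηirr hp
    (a := m * cden ξ (n + 1)) (by
      rw [hη]
      push_cast
      exact abs_div_sub_mul_cden_div_cnum_lt hξirr hξ1 hb)
  exact ⟨k, by exact_mod_cast hk⟩

/-- Proposition 2.4: if `η < m` and the partial quotient `b_{n+1}` of `ξ`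
satisfies `b_{n+1} ≥ 2m + 1`, then `m q_n / p_n` is a convergent of `η`. -/
theorem big_partial_quotient_gives_connection
    (ξ η : ℝ) (m : ℕ) (hξpos : 0 < ξ) (hηpos : 0 < η)
    (hξirr : Irrational ξ) (hηirr : Irrational η) (hm : 0 < m)
    (hmul : ξ * η = m) (hηm : η < m) (n : ℕ)
    (hb : (2 * m + 1 : ℤ) ≤ pquot ξ (n + 1)) :
    ∃ k : ℕ, (m : ℝ) * (cden ξ (n + 1) : ℝ) / (cnum ξ (n + 1) : ℝ) =
      (cnum η (k + 1) : ℝ) / (cden η (k + 1) : ℝ) :=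
  big_partial_quotient_gives_connection_general ξ η m hηpos hξirr hηirr hmul hηm n hb
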